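/- arXiv:1911.06705 — 4 statements merged into one kernel-verified Lean document; each statement's English description precedes it below -/
import Mathlib

section
/- A simple digraph D on n vertices satisfies F(D) = n − 2 if and only if every vertex has positive in-degree and there exist vertices u, v with N⁻(u) \ {v} = N⁻(v) \ {u}. -/
/-- The set of out-neighbors of `v` in the digraph with arc relation `A`. -/
def Nout {V : Type} (A : V → V → Prop) (v : V) : Set V := {w | A v w}

/-- The set of in-neighbors of `v`. -/
def Nin {V : Type} (A : V → V → Prop) (v : V) : Set V := {w | A w v}

/-- One application of the color change rule to the set `S` of filled vertices. -/
def Bstep {V : Type} (A : V → V → Prop) (S : Set V) : Set V :=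
  S ∪ {w | ∃ v ∈ S, Nout A v \ S = {w}}

/-- `S` is a zero forcing set: iterating the color change rule fills all vertices. -/
def IsZFS {V : Type} (A : V → V → Prop) (S : Set V) : Prop :=
  ∃ t, (Bstep A)^[t] S = Set.univ

/-- The failed zero forcing number: the maximum cardinality of a failed zero forcing set. -/
noncomputable def Fnum {V : Type} (A : V → V → Prop) : ℕ :=
  sSup {k | ∃ S : Set V, ¬ IsZFS A S ∧ S.ncard = k}

/-- The zero forcing number: the minimum cardinality of a zero forcing set. -/
noncomputable def Znum {V : Type} (A : V → V → Prop) : ℕ :=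
  sInf {k | ∃ S : Set V, IsZFS A S ∧ S.ncard = k}

/-- `W` is a critical set: `W` is nonempty and no vertex outside `W` has exactly one
out-neighbor in `W`. -/
def IsCritical {V : Type} (A : V → V → Prop) (W : Set V) : Prop :=
  W.Nonempty ∧ ∀ v ∈ Wᶜ, (Nout A v ∩ W).ncard ≠ 1

/-- `D` is a directed cycle: either a single vertex with no arcs, or the vertices can be
cyclically labeled so that the arcs are exactly the consecutive ones. -/
def IsDirectedCycle {V : Type} [Fintype V] (A : V → V → Prop) : Prop :=
  (Fintype.card V = 1 ∧ ∀ u v : V, ¬ A u v) ∨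
  (2 ≤ Fintype.card V ∧ ∃ e : ZMod (Fintype.card V) ≃ V,
      ∀ i j : ZMod (Fintype.card V), A (e i) (e j) ↔ j = i + 1)


/-!
A vertex with no in-neighbour can never be filled, so its complement is a failed set of size
`n - 1`; hence `F(D) = n - 2` forces positive in-degrees, and then every set missing at most one
vertex is forcing. A set `S` with `Sᶜ = {u, v}` fails exactly when no vertex of `S` has exactly
one of `u`, `v` as out-neighbour, i.e. when `u` and `v` have the same in-neighbours apart from
each other: an `x ∈ S` pointing only to `u` would fill `u` and leave a single empty vertex.
-/

section

variable {V : Type} {A : V → V → Prop}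

lemma subset_bstep (S : Set V) : S ⊆ Bstep A S :=
  Set.subset_union_left

lemma isZFS_univ : IsZFS A Set.univ :=
  ⟨0, rfl⟩

lemma IsZFS.of_bstep {S : Set V} (h : IsZFS A (Bstep A S)) : IsZFS A S := by
  obtain ⟨t, ht⟩ := h
  exact ⟨t + 1, by rwa [Function.iterate_succ_apply]⟩

lemma mem_bstep_of_forces {S : Set V} {x w : V} (hx : x ∈ S) (hxw : Nout A x \ S = {w}) :
    w ∈ Bstep A S :=
  Or.inr ⟨x, hx, hxw⟩

lemma bstep_compl_eq_of_isCritical {W : Set V} (hW : IsCritical A W) :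
    Bstep A Wᶜ = Wᶜ := by
  refine (Set.union_subset subset_rfl ?_).antisymm (subset_bstep _)
  rintro w ⟨x, hx, hxw⟩
  rw [Set.sdiff_compl] at hxw
  exact absurd (Set.ncard_eq_one.mpr ⟨w, hxw⟩) (hW.2 x hx)

lemma not_isZFS_compl_of_isCritical {W : Set V} (hW : IsCritical A W) : ¬ IsZFS A Wᶜ := by
  rintro ⟨t, ht⟩
  obtain ⟨w, hw⟩ := hW.1
  rw [Function.iterate_fixed (bstep_compl_eq_of_isCritical hW)] at ht
  exact (ht ▸ Set.mem_univ w : w ∈ Wᶜ) hw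

lemma isCritical_singleton_of_forall_not_adj {w : V} (hw : ∀ x, ¬ A x w) :
    IsCritical A {w} := by
  refine ⟨Set.singleton_nonempty w, fun x _ hx => ?_⟩
  have : Nout A x ∩ {w} = ∅ := Set.inter_singleton_eq_empty.mpr (hw x)
  simp [this] at hx

lemma isCritical_pair {u v : V} (huv : u ≠ v)
    (hpair : ∀ x, x ≠ u → x ≠ v → (A x u ↔ A x v)) : IsCritical A {u, v} := by
  refine ⟨Set.insert_nonempty u {v}, fun x hx => ?_⟩
  simp only [Set.mem_compl_iff, Set.mem_insert_iff, Set.mem_singleton_iff, not_or] at hx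
  by_cases hxu : A x u
  · have : Nout A x ∩ {u, v} = {u, v} :=
      Set.inter_eq_right.mpr (Set.pair_subset hxu ((hpair x hx.1 hx.2).mp hxu))
    rw [this, Set.ncard_pair huv]
    decide
  · have : Nout A x ∩ {u, v} = ∅ := by
      ext y
      simp only [Set.mem_inter_iff, Set.mem_insert_iff, Set.mem_singleton_iff,
        Set.mem_empty_iff_false, iff_false, not_and]
      rintro hy (rfl | rfl)
      exacts [hxu hy, hxu ((hpair x hx.1 hx.2).mpr hy)]
    rw [this, Set.ncard_empty]
    decide

lemma isZFS_of_compl_subset_singleton (hA : Irreflexive A) {S : Set V} {w : V}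
    (hw : ∃ x, A x w) (hS : Sᶜ ⊆ {w}) : IsZFS A S := by
  have hfill : ∀ T, S ⊆ T → w ∈ T → T = Set.univ := fun T hST hwT =>
    Set.eq_univ_of_forall fun y => by
      by_cases hy : y ∈ S
      · exact hST hy
      · rwa [Set.mem_singleton_iff.mp (hS hy)]
  by_cases hw' : w ∈ S
  · exact hfill S subset_rfl hw' ▸ isZFS_univ
  obtain ⟨x, hxw⟩ := hw
  have hx : x ∈ S := by
    by_contra hx
    exact hA w (by rwa [Set.mem_singleton_iff.mp (hS hx)] at hxw)
  have hforce : Nout A x \ S = {w} :=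
    Set.eq_singleton_iff_unique_mem.mpr ⟨⟨hxw, hw'⟩, fun y hy => hS hy.2⟩
  exact IsZFS.of_bstep (hfill _ (subset_bstep S) (mem_bstep_of_forces hx hforce) ▸ isZFS_univ)

lemma two_le_ncard_compl_of_not_isZFS [Finite V] (hA : Irreflexive A)
    (hin : ∀ w, ∃ x, A x w) {S : Set V} (hS : ¬ IsZFS A S) : 2 ≤ Sᶜ.ncard := by
  by_contra! h
  rcases (Set.ncard_le_one_iff_eq).mp (Nat.le_of_lt_succ h) with hS' | ⟨w, hw⟩
  · exact hS (Set.compl_empty_iff.mp hS' ▸ isZFS_univ)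
  · exact hS (isZFS_of_compl_subset_singleton hA (hin w) hw.subset)

lemma adj_of_adj_of_not_isZFS_compl_pair (hA : Irreflexive A) (hin : ∀ w, ∃ x, A x w)
    {u v x : V} (hS : ¬ IsZFS A ({u, v} : Set V)ᶜ) (hxu : x ≠ u) (hxv : x ≠ v)
    (hadj : A x u) : A x v := by
  by_contra hadj'
  have hx : x ∈ ({u, v} : Set V)ᶜ := by simp [hxu, hxv]
  have hforce : Nout A x \ ({u, v} : Set V)ᶜ = {u} := by
    rw [Set.sdiff_compl]
    ext y
    simp only [Set.mem_inter_iff, Set.mem_insert_iff, Set.mem_singleton_iff]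
    constructor
    · rintro ⟨hy, rfl | rfl⟩
      exacts [rfl, absurd hy hadj']
    · rintro rfl
      exact ⟨hadj, Or.inl rfl⟩
  have hu := mem_bstep_of_forces hx hforce
  refine hS (IsZFS.of_bstep (isZFS_of_compl_subset_singleton hA (hin v) fun y hy => ?_))
  have hy' : y ∈ ({u, v} : Set V) := by
    by_contra h
    exact hy (subset_bstep _ h)
  rcases hy' with rfl | rfl
  exacts [absurd hu hy, rfl]

lemma nin_diff_eq_iff (hA : Irreflexive A) {u v : V} :
    Nin A u \ {v} = Nin A v \ {u} ↔ ∀ x, x ≠ u → x ≠ v → (A x u ↔ A x v) := by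
  have hu : ∀ x, A x u → x ≠ u := fun x h hx => hA u (hx ▸ h)
  have hv : ∀ x, A x v → x ≠ v := fun x h hx => hA v (hx ▸ h)
  simp only [Set.ext_iff, Set.mem_sdiff, Set.mem_singleton_iff, Nin, Set.mem_ofPred_eq]
  constructor
  · intro h x hxu hxv
    exact ⟨fun hx => ((h x).mp ⟨hx, hxv⟩).1, fun hx => ((h x).mpr ⟨hx, hxu⟩).1⟩
  · intro h x
    exact ⟨fun hx => ⟨(h x (hu x hx.1) hx.2).mp hx.1, hu x hx.1⟩,
      fun hx => ⟨(h x hx.2 (hv x hx.1)).mpr hx.1, hv x hx.1⟩⟩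

lemma bddAbove_ncard_not_isZFS [Finite V] :
    BddAbove {k | ∃ S : Set V, ¬ IsZFS A S ∧ S.ncard = k} :=
  ⟨Nat.card V, by rintro _ ⟨T, -, rfl⟩; exact Set.ncard_le_card T⟩

lemma ncard_le_fnum [Finite V] {S : Set V} (hS : ¬ IsZFS A S) : S.ncard ≤ Fnum A :=
  le_csSup bddAbove_ncard_not_isZFS ⟨S, hS, rfl⟩

lemma fnum_le {k : ℕ} (h : ∀ S : Set V, ¬ IsZFS A S → S.ncard ≤ k) : Fnum A ≤ k :=
  csSup_le' (by rintro _ ⟨S, hS, rfl⟩; exact h S hS)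

lemma exists_not_isZFS_ncard_eq_fnum [Finite V] [Nonempty V] :
    ∃ S : Set V, ¬ IsZFS A S ∧ S.ncard = Fnum A := by
  have hempty : ¬ IsZFS A (∅ : Set V) := by
    simpa using not_isZFS_compl_of_isCritical (A := A) (W := Set.univ)
      ⟨Set.univ_nonempty, fun v hv => absurd (Set.mem_univ v) hv⟩
  exact Nat.sSup_mem (s := {k | ∃ S : Set V, ¬ IsZFS A S ∧ S.ncard = k})
    ⟨0, ∅, hempty, Set.ncard_empty V⟩ bddAbove_ncard_not_isZFS

end

theorem stmt_5 {V : Type} [Fintype V] (A : V → V → Prop) (hA : Irreflexive A)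
    (hcard : 2 ≤ Fintype.card V) :
    Fnum A = Fintype.card V - 2 ↔
      ((∀ w : V, ∃ u : V, A u w) ∧
        ∃ u v : V, u ≠ v ∧ Nin A u \ {v} = Nin A v \ {u}) := by
  have : Nonempty V := Fintype.card_pos_iff.mp (by omega)
  simp_rw [nin_diff_eq_iff hA]
  rw [← Nat.card_eq_fintype_card] at hcard ⊢
  constructor
  · intro hF
    have hin : ∀ w, ∃ u, A u w := by
      by_contra! ⟨w, hw⟩
      have := ncard_le_fnum
        (not_isZFS_compl_of_isCritical (isCritical_singleton_of_forall_not_adj hw))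
      rw [Set.ncard_compl, Set.ncard_singleton] at this
      omega
    obtain ⟨S, hS, hSF⟩ := exists_not_isZFS_ncard_eq_fnum (A := A)
    have hSc : Sᶜ.ncard = 2 := by
      rw [Set.ncard_compl]
      omega
    obtain ⟨u, v, huv, hSuv⟩ := Set.ncard_eq_two.mp hSc
    rw [← compl_compl S, hSuv] at hS
    refine ⟨hin, u, v, huv, fun x hxu hxv => ⟨?_, ?_⟩⟩
    · exact adj_of_adj_of_not_isZFS_compl_pair hA hin hS hxu hxv
    · exact adj_of_adj_of_not_isZFS_compl_pair hA hin (Set.pair_comm u v ▸ hS) hxv hxu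
  · rintro ⟨hin, u, v, huv, hpair⟩
    refine le_antisymm (fnum_le fun S hS => ?_) ?_
    · have := two_le_ncard_compl_of_not_isZFS hA hin hS
      rw [Set.ncard_compl] at this
      omega
    · have := ncard_le_fnum (not_isZFS_compl_of_isCritical (isCritical_pair huv hpair))
      rwa [Set.ncard_compl, Set.ncard_pair huv] at this
end

section
/- If a digraph D is the disjoint union of components D_1, ..., D_k (k ≥ 1), then F(D) = max over j of ( F(D_j) + Σ_{i≠j} |V(D_i)| ). -/
/-- A digraph is weakly connected if any two vertices are joined by a path in the
underlying undirected graph. -/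
def WeaklyConnected {W : Type} (A : W → W → Prop) : Prop :=
  ∀ u v : W, Relation.ReflTransGen (fun a b => A a b ∨ A b a) u v

/-- The disjoint union of a family of digraphs. -/
def sumRel {k : ℕ} {V : Fin k → Type} (A : ∀ i, V i → V i → Prop) :
    (Σ i, V i) → (Σ i, V i) → Prop :=
  fun x y => ∃ h : x.1 = y.1, A y.1 (h ▸ x.2) y.2

section Aux

variable {k : ℕ} {V : Fin k → Type}

/-- The mySlice of a set of the disjoint union in component `i`. -/
def mySlice (i : Fin k) (S : Set (Σ i, V i)) : Set (V i) := {x | ⟨i, x⟩ ∈ S}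

lemma mySlice_union (i : Fin k) (S T : Set (Σ i, V i)) :
    mySlice i (S ∪ T) = mySlice i S ∪ mySlice i T := rfl

lemma mySlice_univ (i : Fin k) : mySlice i (Set.univ : Set (Σ i, V i)) = Set.univ := rfl

lemma eq_univ_iff_mySlices (S : Set (Σ i, V i)) :
    S = Set.univ ↔ ∀ i, mySlice i S = Set.univ := by
  constructor
  · rintro rfl i; rfl
  · intro h
    ext ⟨i, x⟩
    simp only [Set.mem_univ, iff_true]
    have : x ∈ mySlice i S := by rw [h i]; trivial
    exact this

lemma sumRel_mk_iff {A : ∀ i, V i → V i → Prop} {i : Fin k} {v w : V i} :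
    sumRel A ⟨i, v⟩ ⟨i, w⟩ ↔ A i v w := by
  constructor
  · rintro ⟨h, hw⟩
    exact hw
  · intro h
    exact ⟨rfl, h⟩

lemma nout_sum (A : ∀ i, V i → V i → Prop) (i : Fin k) (v : V i) :
    Nout (sumRel A) ⟨i, v⟩ = Sigma.mk i '' Nout (A i) v := by
  ext ⟨j, w⟩
  constructor
  · intro hw
    have h : i = j := hw.choose
    subst h
    exact ⟨w, sumRel_mk_iff.mp hw, rfl⟩
  · rintro ⟨x, hx, heq⟩
    obtain ⟨h1, h2⟩ := Sigma.mk.inj_iff.mp heq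
    subst h1
    have h2' : x = w := eq_of_heq h2
    subst h2'
    exact sumRel_mk_iff.mpr hx

lemma image_mk_diff (i : Fin k) (T : Set (V i)) (S : Set (Σ i, V i)) :
    (Sigma.mk i '' T) \ S = Sigma.mk i '' (T \ mySlice i S) := by
  ext ⟨j, y⟩
  constructor
  · rintro ⟨⟨x, hx, heq⟩, hS⟩
    obtain ⟨h1, h2⟩ := Sigma.mk.inj_iff.mp heq
    subst h1
    have h2' : x = y := eq_of_heq h2
    subst h2'
    exact ⟨x, ⟨hx, hS⟩, rfl⟩
  · rintro ⟨x, ⟨hx, hxS⟩, heq⟩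
    obtain ⟨h1, h2⟩ := Sigma.mk.inj_iff.mp heq
    subst h1
    have h2' : x = y := eq_of_heq h2
    subst h2'
    exact ⟨⟨x, hx, rfl⟩, hxS⟩

lemma mySlice_Bstep (A : ∀ i, V i → V i → Prop) (i : Fin k) (S : Set (Σ i, V i)) :
    mySlice i (Bstep (sumRel A) S) = Bstep (A i) (mySlice i S) := by
  unfold Bstep
  rw [mySlice_union]
  congr 1
  ext x
  constructor
  · rintro ⟨⟨j, vj⟩, hv, hset⟩
    rw [nout_sum, image_mk_diff] at hset
    have hmem : (⟨i, x⟩ : Σ i, V i) ∈ Sigma.mk j '' (Nout (A j) vj \ mySlice j S) := by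
      rw [hset]; rfl
    obtain ⟨y, hy, heq⟩ := hmem
    obtain ⟨h1, h2⟩ := Sigma.mk.inj_iff.mp heq
    subst h1
    have h2' : y = x := eq_of_heq h2
    subst h2'
    refine ⟨vj, hv, ?_⟩
    rw [← Set.image_singleton] at hset
    exact (Set.image_eq_image sigma_mk_injective).mp hset
  · rintro ⟨vi, hvi, hset⟩
    exact ⟨⟨i, vi⟩, hvi, by rw [nout_sum, image_mk_diff, hset, Set.image_singleton]⟩

lemma mySlice_iter (A : ∀ i, V i → V i → Prop) (i : Fin k) (S : Set (Σ i, V i)) (t : ℕ) :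
    mySlice i ((Bstep (sumRel A))^[t] S) = (Bstep (A i))^[t] (mySlice i S) := by
  induction t with
  | zero => rfl
  | succ n ih =>
    rw [Function.iterate_succ_apply', Function.iterate_succ_apply', mySlice_Bstep, ih]

lemma Bstep_univ {W : Type} (A : W → W → Prop) : Bstep A Set.univ = Set.univ := by
  simp [Bstep]

lemma iter_univ {W : Type} (A : W → W → Prop) (d : ℕ) :
    (Bstep A)^[d] (Set.univ : Set W) = Set.univ := by
  induction d with
  | zero => rfl
  | succ n ih => rw [Function.iterate_succ_apply', ih, Bstep_univ]

lemma iter_univ_of_le {W : Type} (A : W → W → Prop) {S : Set W} {t T : ℕ} (h : t ≤ T)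
    (hS : (Bstep A)^[t] S = Set.univ) : (Bstep A)^[T] S = Set.univ := by
  obtain ⟨d, rfl⟩ := Nat.exists_eq_add_of_le h
  rw [Nat.add_comm, Function.iterate_add_apply, hS, iter_univ]

lemma isZFS_sum_iff (A : ∀ i, V i → V i → Prop) (S : Set (Σ i, V i)) :
    IsZFS (sumRel A) S ↔ ∀ i, IsZFS (A i) (mySlice i S) := by
  constructor
  · rintro ⟨t, ht⟩ i
    exact ⟨t, by rw [← mySlice_iter, ht, mySlice_univ]⟩
  · intro h
    choose t ht using h
    refine ⟨Finset.univ.sup t, ?_⟩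
    rw [eq_univ_iff_mySlices]
    intro i
    rw [mySlice_iter]
    exact iter_univ_of_le _ (Finset.le_sup (Finset.mem_univ i)) (ht i)

open Classical in
lemma ncard_mySlices [∀ i, Fintype (V i)] (S : Set (Σ i, V i)) :
    S.ncard = ∑ i, (mySlice i S).ncard := by
  have e : S ≃ Σ i, (mySlice i S) :=
    { toFun := fun p => ⟨p.1.1, p.1.2, p.2⟩
      invFun := fun p => ⟨⟨p.1, p.2.1⟩, p.2.2⟩
      left_inv := fun ⟨⟨i, x⟩, h⟩ => rfl
      right_inv := fun ⟨i, x, h⟩ => rfl }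
  rw [← Nat.card_coe_set_eq, Nat.card_congr e, Nat.card_eq_fintype_card,
    Fintype.card_sigma]
  exact Finset.sum_congr rfl fun i _ => by
    rw [← Nat.card_coe_set_eq, Nat.card_eq_fintype_card]

lemma not_isZFS_empty {W : Type} [Nonempty W] (A : W → W → Prop) :
    ¬ IsZFS A (∅ : Set W) := by
  have key : ∀ t, (Bstep A)^[t] (∅ : Set W) = ∅ := by
    intro t
    induction t with
    | zero => rfl
    | succ n ih =>
      rw [Function.iterate_succ_apply', ih]
      simp [Bstep]
  rintro ⟨t, ht⟩
  rw [key t] at ht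
  exact (Set.empty_ne_univ) ht

lemma Fnum_spec {W : Type} [Fintype W] [Nonempty W] (A : W → W → Prop) :
    ∃ S : Set W, ¬ IsZFS A S ∧ S.ncard = Fnum A := by
  have hne : {n | ∃ S : Set W, ¬ IsZFS A S ∧ S.ncard = n}.Nonempty :=
    ⟨0, ∅, not_isZFS_empty A, Set.ncard_empty W⟩
  have hbdd : BddAbove {n | ∃ S : Set W, ¬ IsZFS A S ∧ S.ncard = n} := by
    refine ⟨Fintype.card W, ?_⟩
    rintro n ⟨S, -, rfl⟩
    calc S.ncard ≤ (Set.univ : Set W).ncard :=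
          Set.ncard_le_ncard (Set.subset_univ S) Set.finite_univ
      _ = Fintype.card W := by rw [Set.ncard_univ, Nat.card_eq_fintype_card]
  obtain ⟨S, hS, hc⟩ := Nat.sSup_mem hne hbdd
  exact ⟨S, hS, hc⟩

lemma le_Fnum {W : Type} [Fintype W] (A : W → W → Prop) {S : Set W}
    (hS : ¬ IsZFS A S) : S.ncard ≤ Fnum A := by
  have hbdd : BddAbove {n | ∃ S : Set W, ¬ IsZFS A S ∧ S.ncard = n} := by
    refine ⟨Fintype.card W, ?_⟩
    rintro n ⟨S, -, rfl⟩
    calc S.ncard ≤ (Set.univ : Set W).ncard :=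
          Set.ncard_le_ncard (Set.subset_univ S) Set.finite_univ
      _ = Fintype.card W := by rw [Set.ncard_univ, Nat.card_eq_fintype_card]
  exact le_csSup hbdd ⟨S, hS, rfl⟩

end Aux

lemma ncard_le_card {W : Type} [Fintype W] (S : Set W) : S.ncard ≤ Fintype.card W := by
  calc S.ncard ≤ (Set.univ : Set W).ncard :=
        Set.ncard_le_ncard (Set.subset_univ S) Set.finite_univ
    _ = Fintype.card W := by rw [Set.ncard_univ, Nat.card_eq_fintype_card]

theorem stmt_14 (k : ℕ) (hk : 1 ≤ k) (V : Fin k → Type) [∀ i, Fintype (V i)]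
    (A : ∀ i, V i → V i → Prop) (hne : ∀ i, Nonempty (V i))
    (hconn : ∀ i, WeaklyConnected (A i)) :
    Fnum (sumRel A) =
      Finset.univ.sup (fun j : Fin k =>
        Fnum (A j) + ∑ i ∈ Finset.univ.erase j, Fintype.card (V i)) := by
  classical
  haveI : ∀ i, Nonempty (V i) := hne
  haveI : Nonempty (Σ i, V i) := ⟨⟨⟨0, hk⟩, Classical.arbitrary _⟩⟩
  apply le_antisymm
  · obtain ⟨S, hS, hc⟩ := Fnum_spec (sumRel A)
    rw [← hc]
    rw [isZFS_sum_iff] at hS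
    push_neg at hS
    obtain ⟨j, hj⟩ := hS
    calc S.ncard = ∑ i, (mySlice i S).ncard := ncard_mySlices S
      _ = (mySlice j S).ncard + ∑ i ∈ Finset.univ.erase j, (mySlice i S).ncard :=
          (Finset.add_sum_erase _ _ (Finset.mem_univ j)).symm
      _ ≤ Fnum (A j) + ∑ i ∈ Finset.univ.erase j, Fintype.card (V i) :=
          add_le_add (le_Fnum _ hj)
            (Finset.sum_le_sum fun i _ => ncard_le_card _)
      _ ≤ _ := Finset.le_sup (f := fun j : Fin k =>
          Fnum (A j) + ∑ i ∈ Finset.univ.erase j, Fintype.card (V i)) (Finset.mem_univ j)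
  · apply Finset.sup_le
    intro j _
    obtain ⟨T, hT, hc⟩ := Fnum_spec (A j)
    set S : Set (Σ i, V i) := {x | ∀ h : x.1 = j, (h ▸ x.2) ∈ T} with hSdef
    have hsj : mySlice j S = T := by
      ext x
      constructor
      · intro h; exact h rfl
      · intro h hh; exact h
    have hsi : ∀ i, i ≠ j → mySlice i S = Set.univ := by
      intro i hij
      ext x
      simp only [Set.mem_univ, iff_true]
      intro h
      exact absurd h hij
    have hnz : ¬ IsZFS (sumRel A) S := by
      rw [isZFS_sum_iff]
      intro h
      exact hT (by rw [← hsj]; exact h j)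
    calc Fnum (A j) + ∑ i ∈ Finset.univ.erase j, Fintype.card (V i)
        = S.ncard := by
          rw [ncard_mySlices, ← Finset.add_sum_erase _ _ (Finset.mem_univ j), hsj, hc]
          congr 1
          refine Finset.sum_congr rfl fun i hi => ?_
          rw [hsi i (Finset.ne_of_mem_erase hi), Set.ncard_univ, Nat.card_eq_fintype_card]
      _ ≤ Fnum (sumRel A) := le_Fnum _ hnz
end

section
/- Every directed acyclic graph D on n ≥ 1 vertices satisfies F(D) = n − 1. -/
/-!
The complement of a source is a failed zero forcing set: a vertex can only be filled by
an in-neighbor, so the color change rule never reaches the source. No set of size `n` fails,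
and an acyclic digraph always has a source, hence `F(D) = n - 1`.
-/

section ZeroForcing

variable {V : Type} (A : V → V → Prop)

theorem not_isZFS_of_bstep_eq_self {S : Set V} (hfix : Bstep A S = S) (hS : S ≠ Set.univ) :
    ¬ IsZFS A S := by
  rintro ⟨t, ht⟩
  exact hS (Function.iterate_fixed hfix t ▸ ht)

theorem bstep_compl_singleton_of_forall_not_adj {v : V} (hv : ∀ u, ¬ A u v) :
    Bstep A {v}ᶜ = {v}ᶜ := by
  refine Set.union_eq_self_of_subset_right ?_
  rintro w ⟨u, -, hw⟩
  by_contra hwv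
  obtain rfl : w = v := by simpa using hwv
  have hvw : w ∈ Nout A u \ {w}ᶜ := by rw [hw]; rfl
  exact hv u hvw.1

theorem card_sub_one_mem_upperBounds_failed [Finite V] :
    Nat.card V - 1 ∈ upperBounds {k | ∃ S : Set V, ¬ IsZFS A S ∧ S.ncard = k} := by
  rintro k ⟨S, hS, rfl⟩
  have : S.ncard < Nat.card V := Set.ncard_lt_card fun h => hS ⟨0, h⟩
  omega

theorem fnum_le_card_sub_one [Finite V] : Fnum A ≤ Nat.card V - 1 :=
  csSup_le' (card_sub_one_mem_upperBounds_failed A)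

theorem card_sub_one_le_fnum_of_forall_not_adj [Finite V] {v : V} (hv : ∀ u, ¬ A u v) :
    Nat.card V - 1 ≤ Fnum A := by
  have hfailed : ¬ IsZFS A {v}ᶜ :=
    not_isZFS_of_bstep_eq_self A (bstep_compl_singleton_of_forall_not_adj A hv) (by simp)
  refine le_csSup ⟨_, card_sub_one_mem_upperBounds_failed A⟩ ⟨{v}ᶜ, hfailed, ?_⟩
  rw [Set.ncard_compl, Set.ncard_singleton]

end ZeroForcing

theorem exists_forall_not_adj_of_acyclic {V : Type} [Finite V] [Nonempty V] (A : V → V → Prop)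
    (hacyc : ∀ v : V, ¬ Relation.TransGen A v v) : ∃ v, ∀ u, ¬ A u v := by
  have : Std.Irrefl (Relation.TransGen A) := ⟨hacyc⟩
  obtain ⟨v, -, hv⟩ :=
    (Finite.wellFounded_of_trans_of_irrefl (Relation.TransGen A)).has_min Set.univ Set.univ_nonempty
  exact ⟨v, fun u hu => hv u trivial (.single hu)⟩

theorem stmt_15_general {V : Type} [Fintype V] [Nonempty V] (A : V → V → Prop)
    (hacyc : ∀ v : V, ¬ Relation.TransGen A v v) :
    Fnum A = Fintype.card V - 1 := by
  obtain ⟨v, hv⟩ := exists_forall_not_adj_of_acyclic A hacyc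
  rw [← Nat.card_eq_fintype_card]
  exact (fnum_le_card_sub_one A).antisymm (card_sub_one_le_fnum_of_forall_not_adj A hv)

theorem stmt_15 {V : Type} [Fintype V] [Nonempty V] (A : V → V → Prop)
    (hA : Irreflexive A) (hacyc : ∀ v : V, ¬ Relation.TransGen A v v) :
    Fnum A = Fintype.card V - 1 :=
  stmt_15_general A hacyc
end

section
/- For all integers n ≥ 3 and 0 ≤ k ≤ n − 1, there exists a weak cycle D on n vertices (a digraph whose underlying graph is the cycle C_n) with F(D) = k. -/
/-!
A set of filled vertices fails to force exactly when it lies in a proper *stalled* set, a proper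
fixed point of the color change rule; so `F(D)` is the largest size of a proper stalled set.

The examples are the directed cycle `0 → 1 → ⋯ → n-1 → 0` with the forward arcs out of a set `S`
removed and backward arcs out of a set `B` added. For `2k ≤ n` take `S = ∅` and `B` the `k` odd
vertices below `2k`: a stalled set containing a vertex outside `B` propagates forward around the
whole cycle, while `B` itself is stalled since each of its vertices has two empty out-neighbors.
For `n ≤ 2k` put `m = n - 1 - k`, make `0` a sink and `B = {1, …, 2m+1}`: two consecutive filled
vertices among `0, …, 2m+1` propagate down to `0, 1` and then forward around the cycle, so a
proper stalled set misses a vertex of each pair `{2j, 2j+1}`, `j ≤ m`; the vertices that are even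
or above `2m+1` form a proper stalled set with `n - 1 - m` elements.
-/

section ColorChange

variable {V : Type} {A : V → V → Prop}

def IsStalled (A : V → V → Prop) (T : Set V) : Prop := Bstep A T = T

lemma bstep_mono : Monotone (Bstep A) := by
  rintro S T hST w (hw | ⟨v, hv, hvw⟩)
  · exact subset_bstep T (hST hw)
  · by_cases hwT : w ∈ T
    · exact subset_bstep T hwT
    · refine Or.inr ⟨v, hST hv, Set.Subset.antisymm ?_ ?_⟩
      · exact hvw ▸ Set.sdiff_subset_sdiff_right hST
      · rintro _ rfl
        exact ⟨(hvw.symm ▸ rfl : _ ∈ Nout A v \ S).1, hwT⟩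

lemma IsStalled.mem_of_forall {T : Set V} (hT : IsStalled A T) {v w : V} (hv : v ∈ T)
    (hw : A v w) (h : ∀ u, A v u → u ≠ w → u ∈ T) : w ∈ T := by
  by_contra hwT
  have hwB : w ∈ Bstep A T := Or.inr ⟨v, hv, Set.eq_singleton_iff_unique_mem.2
    ⟨⟨hw, hwT⟩, fun u hu => by_contra fun huw => hu.2 (h u hu.1 huw)⟩⟩
  exact hwT (hT ▸ hwB)

lemma isStalled_of_forall {T : Set V}
    (h : ∀ v ∈ T, ∀ w, A v w → w ∉ T → ∃ u ≠ w, A v u ∧ u ∉ T) : IsStalled A T := by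
  refine Set.Subset.antisymm ?_ (subset_bstep T)
  rintro w (hw | ⟨v, hv, hvw⟩)
  · exact hw
  · have hw : w ∈ Nout A v \ T := hvw ▸ rfl
    obtain ⟨u, huw, hu, huT⟩ := h v hv w hw.1 hw.2
    exact absurd (hvw ▸ ⟨hu, huT⟩ : u ∈ ({w} : Set V)) huw

lemma not_isZFS_of_subset {S T : Set V} (hT : IsStalled A T) (hTu : T ≠ Set.univ)
    (hST : S ⊆ T) : ¬ IsZFS A S := by
  rintro ⟨t, ht⟩
  have hsub : ∀ t, (Bstep A)^[t] S ⊆ T := by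
    intro t
    induction t with
    | zero => exact hST
    | succ t ih => rw [Function.iterate_succ_apply', ← hT]; exact bstep_mono ih
  exact hTu (Set.eq_univ_of_univ_subset (ht ▸ hsub t))

lemma exists_isStalled_superset [Finite V] {S : Set V} (hS : ¬ IsZFS A S) :
    ∃ T, S ⊆ T ∧ IsStalled A T ∧ T ≠ Set.univ := by
  let f : ℕ →o Set V := ⟨fun t => (Bstep A)^[t] S, monotone_nat_of_le_succ fun t => by
    rw [Function.iterate_succ_apply']; exact subset_bstep _⟩
  obtain ⟨N, hN⟩ := WellFoundedGT.monotone_chain_condition f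
  refine ⟨f N, f.monotone (Nat.zero_le N), ?_, fun h => hS ⟨N, h⟩⟩
  have := hN (N + 1) N.le_succ
  simp only [f, OrderHom.coe_mk, Function.iterate_succ_apply'] at this
  exact this.symm

theorem fnum_eq_of_isStalled [Finite V] {k : ℕ} {T₀ : Set V} (h₀ : IsStalled A T₀)
    (hT₀ : T₀ ≠ Set.univ) (hk : k ≤ T₀.ncard)
    (hmax : ∀ T, IsStalled A T → T ≠ Set.univ → T.ncard ≤ k) : Fnum A = k := by
  have hset : {j | ∃ S : Set V, ¬ IsZFS A S ∧ S.ncard = j} = Set.Iic k := by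
    ext j
    constructor
    · rintro ⟨S, hS, rfl⟩
      obtain ⟨T, hST, hT, hTu⟩ := exists_isStalled_superset hS
      exact (Set.ncard_le_ncard hST).trans (hmax T hT hTu)
    · intro hj
      obtain ⟨S, hST, rfl⟩ := Set.exists_subset_card_eq (hj.trans hk)
      exact ⟨S, not_isZFS_of_subset h₀ hT₀ hST, rfl⟩
  rw [Fnum, hset, csSup_Iic]

end ColorChange

namespace Fin

variable {n : ℕ} [NeZero n]

lemma val_add_one_of_add_one_eq {i : Fin n} (h : i.val + 1 = n) : (i + 1).val = 0 := by
  rw [Fin.val_add, Fin.val_one', Nat.add_mod_mod, h, Nat.mod_self]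

lemma eq_add_one_of_val_eq {i j : Fin n} (h : j.val = i.val + 1) : j = i + 1 :=
  Fin.ext (by rw [Fin.val_add_one_of_lt' (h ▸ j.isLt)]; exact h)

lemma add_one_ne_sub_one (hn : 3 ≤ n) (i : Fin n) : i + 1 ≠ i - 1 := by
  intro h
  rw [sub_eq_add_neg, add_right_inj, ← add_eq_zero_iff_eq_neg] at h
  have := congrArg Fin.val h
  rw [Fin.val_add, Fin.val_one', Nat.mod_eq_of_lt (by omega : 1 < n)] at this
  simp [Nat.mod_eq_of_lt (by omega : 2 < n)] at this

open Fin.NatCast in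
lemma forall_of_add_one {p : Fin n → Prop} {a : Fin n} (ha : p a) (h : ∀ i, p i → p (i + 1))
    (j : Fin n) : p j := by
  have hadd : ∀ t : ℕ, p (a + t) := by
    intro t
    induction t with
    | zero => simpa using ha
    | succ t ih => simpa [Nat.cast_succ, add_assoc] using h _ ih
  simpa using hadd (j - a).val

lemma sub_one_lt_self {i : Fin n} (hi : i ≠ 0) : i - 1 < i := by
  rw [Fin.lt_def, Fin.val_sub_one_of_ne_zero hi]
  have := Fin.val_ne_zero_iff.2 hi
  omega

lemma val_one_of_one_lt (hn : 1 < n) : (1 : Fin n).val = 1 := by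
  rw [Fin.val_one', Nat.mod_eq_of_lt hn]

end Fin

section WeakCycle

variable {n : ℕ} [NeZero n]

def IsWeakCycle (A : Fin n → Fin n → Prop) : Prop :=
  (∀ i j, A i j → j = i + 1 ∨ i = j + 1) ∧ ∀ i, A i (i + 1) ∨ A (i + 1) i

def weakCycleArcs (S B : Set (Fin n)) (v w : Fin n) : Prop :=
  (v ∉ S ∧ w = v + 1) ∨ (v ∈ B ∧ w = v - 1)

variable {S B T : Set (Fin n)}

lemma isWeakCycle_weakCycleArcs (h : ∀ i, i ∉ S ∨ i + 1 ∈ B) :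
    IsWeakCycle (weakCycleArcs S B) := by
  refine ⟨?_, fun i => (h i).imp (fun hi => Or.inl ⟨hi, rfl⟩) fun hi => Or.inr ⟨hi, ?_⟩⟩
  · rintro i j (⟨-, rfl⟩ | ⟨-, rfl⟩)
    · exact Or.inl rfl
    · exact Or.inr (sub_add_cancel i 1).symm
  · exact (add_sub_cancel_right i 1).symm

lemma IsStalled.add_one_mem (hT : IsStalled (weakCycleArcs S B) T) {v : Fin n} (hv : v ∈ T)
    (hS : v ∉ S) (hB : v ∈ B → v - 1 ∈ T) : v + 1 ∈ T := by
  refine hT.mem_of_forall hv (Or.inl ⟨hS, rfl⟩) ?_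
  rintro u (⟨-, rfl⟩ | ⟨hvB, rfl⟩) hu
  · exact absurd rfl hu
  · exact hB hvB

lemma IsStalled.sub_one_mem (hT : IsStalled (weakCycleArcs S B) T) {v : Fin n} (hv : v ∈ T)
    (hB : v ∈ B) (hS : v ∉ S → v + 1 ∈ T) : v - 1 ∈ T := by
  refine hT.mem_of_forall hv (Or.inr ⟨hB, rfl⟩) ?_
  rintro u (⟨hvS, rfl⟩ | ⟨-, rfl⟩) hu
  · exact hS hvS
  · exact absurd rfl hu

end WeakCycle

section DirectedCycleWithBackArcs

variable {n : ℕ} [NeZero n] {B T : Set (Fin n)}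

lemma isStalled_weakCycleArcs_empty_self (hn : 3 ≤ n) (hB : ∀ v ∈ B, v + 1 ∉ B) :
    IsStalled (weakCycleArcs ∅ B) B := by
  have hpred : ∀ v ∈ B, v - 1 ∉ B := fun v hv hv' => hB _ hv' (by rwa [sub_add_cancel])
  refine isStalled_of_forall fun v hv w _ _ => ?_
  by_cases hw : w = v + 1
  · exact ⟨v - 1, hw ▸ (Fin.add_one_ne_sub_one hn v).symm, Or.inr ⟨hv, rfl⟩, hpred v hv⟩
  · exact ⟨v + 1, Ne.symm hw, Or.inl ⟨id, rfl⟩, hB v hv⟩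

lemma IsStalled.subset_of_ne_univ (hT : IsStalled (weakCycleArcs ∅ B) T)
    (hTu : T ≠ Set.univ) : T ⊆ B := by
  intro v hv
  by_contra hvB
  have hstep : ∀ i, i ∈ T ∧ i + 1 ∈ T → i + 1 ∈ T ∧ i + 1 + 1 ∈ T := fun i ⟨hi, hi'⟩ =>
    ⟨hi', hT.add_one_mem hi' id fun _ => by rwa [add_sub_cancel_right]⟩
  have hstart : v ∈ T ∧ v + 1 ∈ T := ⟨hv, hT.add_one_mem hv id fun h => absurd h hvB⟩
  exact hTu (Set.eq_univ_of_forall fun j => (Fin.forall_of_add_one hstart hstep j).1)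

def oddBelow (k : ℕ) : Set (Fin n) := {v | Odd v.val ∧ v.val < 2 * k}

lemma add_one_notMem_oddBelow (k : ℕ) :
    ∀ v ∈ oddBelow k, v + 1 ∉ (oddBelow k : Set (Fin n)) := by
  rintro v ⟨hodd, -⟩ ⟨hodd', -⟩
  rw [Nat.odd_iff] at hodd hodd'
  rcases Nat.lt_or_ge (v.val + 1) n with h | h
  · rw [Fin.val_add_one_of_lt' h] at hodd'; omega
  · rw [Fin.val_add_one_of_add_one_eq (by omega)] at hodd'; omega

lemma zero_notMem_oddBelow (k : ℕ) : (0 : Fin n) ∉ oddBelow k := fun h => by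
  simpa using h.1

open Fin.NatCast in
lemma ncard_oddBelow {k : ℕ} (hk : 2 * k ≤ n) : (oddBelow k : Set (Fin n)).ncard = k := by
  have hval : ∀ j ∈ Set.Iio k, ((2 * j + 1 : ℕ) : Fin n).val = 2 * j + 1 := fun j hj =>
    Fin.val_cast_of_lt (by rw [Set.mem_Iio] at hj; omega)
  apply le_antisymm
  · calc _ ≤ (Set.Iio k).ncard := Set.ncard_le_ncard_of_injOn (fun v : Fin n => v.val / 2)
          (fun v hv => by rw [Set.mem_Iio]; exact Nat.div_lt_of_lt_mul hv.2)
          (fun v hv w hw hvw => by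
            have := Nat.odd_iff.1 hv.1; have := Nat.odd_iff.1 hw.1
            exact Fin.ext (by simp only at hvw; omega))
      _ = k := Set.ncard_Iio_nat k
  · calc k = (Set.Iio k).ncard := (Set.ncard_Iio_nat k).symm
      _ ≤ _ := Set.ncard_le_ncard_of_injOn (fun j : ℕ => ((2 * j + 1 : ℕ) : Fin n))
          (fun j hj => by
            rw [Set.mem_Iio] at hj
            exact ⟨by rw [hval j hj]; exact odd_two_mul_add_one j, by rw [hval j hj]; omega⟩)
          (fun i hi j hj hij => by
            have := congrArg Fin.val hij
            simp only [hval i hi, hval j hj] at this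
            omega)

theorem fnum_weakCycleArcs_oddBelow (hn : 3 ≤ n) {k : ℕ} (hk : 2 * k ≤ n) :
    Fnum (weakCycleArcs ∅ (oddBelow k : Set (Fin n))) = k := by
  refine fnum_eq_of_isStalled (isStalled_weakCycleArcs_empty_self hn (add_one_notMem_oddBelow k))
    (fun h => zero_notMem_oddBelow k (h ▸ Set.mem_univ 0)) (ncard_oddBelow hk).ge
    fun T hT hTu => ?_
  exact ncard_oddBelow hk ▸ Set.ncard_le_ncard (hT.subset_of_ne_univ hTu)

end DirectedCycleWithBackArcs

lemma le_ncard_setOf_le_imp_even {n : ℕ} (m : ℕ) :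
    n - 1 - m ≤ {v : Fin n | v.val ≤ 2 * m + 1 → Even v.val}.ncard := by
  have hcompl : {v : Fin n | v.val ≤ 2 * m + 1 → Even v.val}ᶜ.ncard ≤ m + 1 :=
    calc _ ≤ (Set.Iio (m + 1)).ncard := Set.ncard_le_ncard_of_injOn (fun v : Fin n => v.val / 2)
          (fun v hv => by
            simp only [Set.mem_compl_iff, Set.mem_ofPred_eq, Classical.not_imp] at hv
            rw [Set.mem_Iio]; omega)
          (fun v hv w hw hvw => by
            simp only [Set.mem_compl_iff, Set.mem_ofPred_eq, Classical.not_imp, Nat.even_iff]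
              at hv hw
            exact Fin.ext (by simp only at hvw; omega))
      _ = m + 1 := Set.ncard_Iio_nat _
  have := Set.ncard_add_ncard_compl {v : Fin n | v.val ≤ 2 * m + 1 → Even v.val}
  rw [Nat.card_fin] at this
  omega

section CycleWithSink

variable {n : ℕ} [NeZero n] {S B T : Set (Fin n)}

lemma IsStalled.eq_univ_of_zero_mem_of_one_mem (hT : IsStalled (weakCycleArcs {0} B) T)
    (h0 : 0 ∈ T) (h1 : 1 ∈ T) : T = Set.univ := by
  refine Set.eq_univ_of_forall fun i => ?_
  induction i using WellFoundedLT.induction with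
  | _ i ih =>
    by_cases hi : i = 0
    · exact hi ▸ h0
    have hlt := Fin.sub_one_lt_self hi
    rw [← sub_add_cancel i 1]
    by_cases hj : i - 1 = 0
    · rwa [hj, zero_add]
    exact hT.add_one_mem (ih _ hlt) hj fun _ => ih _ ((Fin.sub_one_lt_self hj).trans hlt)

lemma IsStalled.zero_mem_and_one_mem (hT : IsStalled (weakCycleArcs S B) T) {a : Fin n}
    (hB : ∀ i ≤ a, i ≠ 0 → i ∈ B) (ha : a ∈ T ∧ a + 1 ∈ T) : 0 ∈ T ∧ 1 ∈ T := by
  induction a using WellFoundedLT.induction with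
  | _ a ih =>
    by_cases ha0 : a = 0
    · simpa [ha0] using ha
    have hlt := Fin.sub_one_lt_self ha0
    refine ih _ hlt (fun i hi => hB i (hi.trans hlt.le)) ⟨?_, by rw [sub_add_cancel]; exact ha.1⟩
    exact hT.sub_one_mem ha.1 (hB a le_rfl ha0) fun _ => ha.2

variable (m : ℕ)

abbrev sinkArcs : Fin n → Fin n → Prop := weakCycleArcs {0} (Fin.val ⁻¹' Set.Ioc 0 (2 * m + 1))

lemma IsStalled.not_mem_and_add_one_mem
    (hT : IsStalled (sinkArcs m) T)
    (hTu : T ≠ Set.univ) {a : Fin n} (ha : a.val ≤ 2 * m) : ¬ (a ∈ T ∧ a + 1 ∈ T) := by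
  intro h
  have hB : ∀ i ≤ a, i ≠ 0 → i ∈ Fin.val ⁻¹' Set.Ioc 0 (2 * m + 1) := fun i hi hi0 =>
    ⟨Nat.pos_of_ne_zero (Fin.val_ne_zero_iff.2 hi0), by rw [Fin.le_def] at hi; omega⟩
  obtain ⟨h0, h1⟩ := hT.zero_mem_and_one_mem hB h
  exact hTu (hT.eq_univ_of_zero_mem_of_one_mem h0 h1)

lemma IsStalled.ncard_le_of_ne_univ
    (hT : IsStalled (sinkArcs m) T)
    (hTu : T ≠ Set.univ) (hm : 2 * m + 2 ≤ n) : T.ncard ≤ n - 1 - m := by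
  -- `T` contains at most one vertex of each pair `{2j, 2j+1}` with `j ≤ m`
  let f (v : Fin n) : ℕ := if v.val ≤ 2 * m + 1 then v.val / 2 else v.val - (m + 1)
  have hinj : Set.InjOn f T := by
    intro v hv w hw hvw
    have := v.isLt; have := w.isLt
    simp only [f] at hvw
    split_ifs at hvw
    · rcases lt_trichotomy v.val w.val with h | h | h
      · exact absurd ⟨hv, Fin.eq_add_one_of_val_eq (i := v) (j := w) (by omega) ▸ hw⟩
          (hT.not_mem_and_add_one_mem m hTu (by omega))
      · exact Fin.ext h
      · exact absurd ⟨hw, Fin.eq_add_one_of_val_eq (i := w) (j := v) (by omega) ▸ hv⟩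
          (hT.not_mem_and_add_one_mem m hTu (by omega))
    all_goals exact Fin.ext (by omega)
  calc T.ncard ≤ (Set.Iio (n - 1 - m)).ncard :=
        Set.ncard_le_ncard_of_injOn f (fun v _ => by
          have := v.isLt; simp only [f, Set.mem_Iio]; split_ifs <;> omega) hinj
    _ = n - 1 - m := Set.ncard_Iio_nat _

lemma isStalled_sinkArcs_setOf_le_imp_even (hn : 3 ≤ n) (hm : 2 * m + 2 ≤ n) :
    IsStalled (sinkArcs m) {v : Fin n | v.val ≤ 2 * m + 1 → Even v.val} := by
  refine isStalled_of_forall fun v hv w hvw hw => ?_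
  simp only [Set.mem_ofPred_eq, Classical.not_imp, Nat.even_iff] at hv hw
  have hv0 : v ≠ 0 := by
    rintro rfl
    rcases hvw with ⟨h, -⟩ | ⟨h, -⟩
    exacts [h rfl, by simp at h]
  have hpos := Nat.pos_of_ne_zero (Fin.val_ne_zero_iff.2 hv0)
  have hvm : v.val + 1 ≤ 2 * m + 1 := by
    rcases hvw with ⟨-, rfl⟩ | ⟨hB, -⟩
    · rcases Nat.lt_or_ge (v.val + 1) n with h | h
      · rw [Fin.val_add_one_of_lt' h] at hw; omega
      · rw [Fin.val_add_one_of_add_one_eq (by omega)] at hw; omega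
    · have := hB.2; omega
  have hsucc : (v + 1).val = v.val + 1 := Fin.val_add_one_of_lt' (i := v) (by omega)
  have hpred : (v - 1).val = v.val - 1 := Fin.val_sub_one_of_ne_zero hv0
  have hvB : v ∈ Fin.val ⁻¹' Set.Ioc 0 (2 * m + 1) := ⟨hpos, by omega⟩
  by_cases hw' : w = v + 1
  · refine ⟨v - 1, hw' ▸ (Fin.add_one_ne_sub_one hn v).symm, Or.inr ⟨hvB, rfl⟩, ?_⟩
    simp only [Set.mem_ofPred_eq, hpred, Nat.even_iff]
    omega
  · refine ⟨v + 1, Ne.symm hw', Or.inl ⟨hv0, rfl⟩, ?_⟩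
    simp only [Set.mem_ofPred_eq, hsucc, Nat.even_iff]
    omega

lemma isWeakCycle_sinkArcs (hn : 1 < n) :
    IsWeakCycle (sinkArcs m : Fin n → Fin n → Prop) :=
  isWeakCycle_weakCycleArcs fun i => (em (i = 0)).symm.imp id fun h => by
    rw [h, zero_add, Set.mem_preimage, Fin.val_one_of_one_lt hn]
    exact ⟨one_pos, by omega⟩

theorem fnum_sinkArcs (hn : 3 ≤ n) (hm : 2 * m + 2 ≤ n) :
    Fnum (sinkArcs m : Fin n → Fin n → Prop) = n - 1 - m := by
  refine fnum_eq_of_isStalled (isStalled_sinkArcs_setOf_le_imp_even m hn hm) (fun h => ?_)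
    (le_ncard_setOf_le_imp_even m) fun T hT hTu => hT.ncard_le_of_ne_univ m hTu hm
  have h1 : (1 : Fin n) ∈ {v : Fin n | v.val ≤ 2 * m + 1 → Even v.val} := h ▸ Set.mem_univ 1
  rw [Set.mem_ofPred_eq, Fin.val_one_of_one_lt (by omega)] at h1
  exact Nat.not_even_one (h1 (by omega))

end CycleWithSink

theorem stmt_19 (n k : ℕ) (hn : 3 ≤ n) [NeZero n] (hk : k ≤ n - 1) :
    ∃ A : Fin n → Fin n → Prop,
      (∀ i j : Fin n, A i j → (j = i + 1 ∨ i = j + 1)) ∧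
      (∀ i : Fin n, A i (i + 1) ∨ A (i + 1) i) ∧
      Fnum A = k := by
  rcases le_total (2 * k) n with hkn | hkn
  · obtain ⟨harcs, hcycle⟩ :=
      isWeakCycle_weakCycleArcs (n := n) (S := ∅) (B := oddBelow k) fun _ => Or.inl id
    exact ⟨_, harcs, hcycle, fnum_weakCycleArcs_oddBelow hn hkn⟩
  · obtain ⟨harcs, hcycle⟩ := isWeakCycle_sinkArcs (n - 1 - k) (by omega : 1 < n)
    refine ⟨_, harcs, hcycle, ?_⟩
    rw [fnum_sinkArcs (n - 1 - k) hn (by omega)]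
    omega
end
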